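/- Let S ⊆ ℂ^{n×m} be a linear subspace and Ŝ = { [[0, A],[Bᴴ, 0]] : A, B ∈ S } ⊆ Mat_{n+m}(ℂ). Then for every rank-one matrix X ∈ Mat_{n+m}(ℂ) with ‖X‖₂ = 1 there exists a rank-one matrix x ∈ ℂ^{n×m} with ‖x‖₂ = 1 such that dist₂(x, S) ≤ 2 · dist₂(X, Ŝ). In particular, inf { dist₂(x, S) : x ∈ ℂ^{n×m}, rank(x) = 1, ‖x‖₂ = 1 } ≤ 2 · inf { dist₂(X, Ŝ) : X ∈ Mat_{n+m}(ℂ), rank(X) = 1, ‖X‖₂ = 1 }. -/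

import Mathlib

open Matrix Kronecker BigOperators
open scoped ComplexOrder

noncomputable section

/-- The trace norm (sum of singular values) of a complex matrix: `tr √(AᴴA)`. -/
def traceNorm {m n : Type*} [Fintype m] [Fintype n] [DecidableEq n] (A : Matrix m n ℂ) : ℝ :=
  ((Matrix.posSemidef_conjTranspose_mul_self A).1.eigenvectorUnitary.1 *
    Matrix.diagonal (((↑) : ℝ → ℂ) ∘ (√·) ∘ (Matrix.posSemidef_conjTranspose_mul_self A).1.eigenvalues) *
    (star (Matrix.posSemidef_conjTranspose_mul_self A).1.eigenvectorUnitary : Matrix n n ℂ)).trace.re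

/-- A density matrix: positive semidefinite with trace one. -/
def IsDensity {n : Type*} [Fintype n] [DecidableEq n] (ρ : Matrix n n ℂ) : Prop :=
  ρ.PosSemidef ∧ ρ.trace = 1

/-- Trace norm contraction coefficient of a map on matrices. -/
def etaTr {dA dB : ℕ} (Φ : Matrix (Fin dA) (Fin dA) ℂ → Matrix (Fin dB) (Fin dB) ℂ) : ℝ :=
  sSup {r : ℝ | ∃ ρ σ : Matrix (Fin dA) (Fin dA) ℂ, IsDensity ρ ∧ IsDensity σ ∧ ρ ≠ σ ∧
    r = traceNorm (Φ ρ - Φ σ) / traceNorm (ρ - σ)}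

/-- Optimal success probability for transmitting one of `k` messages through `Φ`. -/
def Psucc {dA dB : ℕ} (Φ : Matrix (Fin dA) (Fin dA) ℂ → Matrix (Fin dB) (Fin dB) ℂ)
    (k : ℕ) : ℝ :=
  sSup {r : ℝ | ∃ (M : Fin k → Matrix (Fin dB) (Fin dB) ℂ)
      (ρ : Fin k → Matrix (Fin dA) (Fin dA) ℂ),
    (∀ i, (M i).PosSemidef) ∧ (∑ i, M i = 1) ∧ (∀ i, IsDensity (ρ i)) ∧
    r = (1 / (k : ℝ)) * ∑ i, ((M i * Φ (ρ i)).trace).re}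

/-- The Euclidean (ℓ₂) norm of a complex vector. -/
def l2norm {n : Type*} [Fintype n] (v : n → ℂ) : ℝ :=
  Real.sqrt (∑ i, ‖v i‖ ^ 2)

/-- Choi state of a map on matrices: `(1/dA) ∑ᵢⱼ Eᵢⱼ ⊗ Φ(Eᵢⱼ)`. -/
def choi {dA dB : ℕ} (Φ : Matrix (Fin dA) (Fin dA) ℂ → Matrix (Fin dB) (Fin dB) ℂ) :
    Matrix (Fin dA × Fin dB) (Fin dA × Fin dB) ℂ :=
  (dA : ℂ)⁻¹ • ∑ i : Fin dA, ∑ j : Fin dA,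
    (Matrix.single i j (1 : ℂ)) ⊗ₖ (Φ (Matrix.single i j (1 : ℂ)))

/-- Frobenius norm of a matrix. -/
def frobNorm {m n : Type*} [Fintype m] [Fintype n] (A : Matrix m n ℂ) : ℝ :=
  Real.sqrt (∑ i, ∑ j, ‖A i j‖ ^ 2)

/-- Frobenius distance from a matrix to a set of matrices. -/
def distMatSet {m n : Type*} [Fintype m] [Fintype n]
    (x : Matrix m n ℂ) (T : Set (Matrix m n ℂ)) : ℝ :=
  sInf {d : ℝ | ∃ y ∈ T, d = frobNorm (x - y)}

/-- The subspace `Ŝ = {[[0, A],[Bᴴ, 0]] : A, B ∈ S}` of `Mat_{n+m}(ℂ)`. -/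
def Shat {n m : ℕ} (S : Submodule ℂ (Matrix (Fin n) (Fin m) ℂ)) :
    Set (Matrix (Fin n ⊕ Fin m) (Fin n ⊕ Fin m) ℂ) :=
  {X | ∃ A ∈ S, ∃ B ∈ S, X = Matrix.fromBlocks 0 A Bᴴ 0}

/-!
Split `X` into blocks `[[X₁₁, X₁₂], [X₂₁, X₂₂]]`. Since the squared Frobenius norm is the sum of the
squared norms of the blocks, each of `‖X₁₁‖`, `‖X₂₂‖`, `dist(X₁₂, S)` and `dist(X₂₁ᴴ, S)` is at
most `ε = dist(X, Ŝ)`. An off-diagonal block `B` has rank at most one, being a submatrix of `X`;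
if `‖B‖ > 1/2`, then `B / ‖B‖` is a unit rank-one matrix at distance `dist(B, S) / ‖B‖ ≤ 2ε`
from `S`. Otherwise `‖X₁₁‖² + ‖X₂₂‖² ≥ 1/2`, so `ε ≥ 1/2`, and any unit rank-one matrix will do,
as its distance to `0 ∈ S` is `1`.
-/

open Metric

attribute [local instance] Matrix.frobeniusSeminormedAddCommGroup
  Matrix.frobeniusNormedAddCommGroup Matrix.frobeniusNormedSpace

theorem csInf_le_mul_csInf_of_forall_exists_le {s t : Set ℝ} {c : ℝ} (hs : BddBelow s)
    (ht : t.Nonempty) (hc : 0 < c) (h : ∀ b ∈ t, ∃ a ∈ s, a ≤ c * b) :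
    sInf s ≤ c * sInf t := by
  rw [← div_le_iff₀' hc]
  refine le_csInf ht fun b hb => ?_
  obtain ⟨a, ha, hab⟩ := h b hb
  rw [div_le_iff₀' hc]
  exact (csInf_le hs ha).trans hab

open scoped Pointwise in
theorem Submodule.infDist_smul {𝕜 E : Type*} [NormedField 𝕜] [SeminormedAddCommGroup E]
    [NormedSpace 𝕜 E] (S : Submodule 𝕜 E) (c : 𝕜) (x : E) :
    infDist (c • x) S = ‖c‖ * infDist x S := by
  rcases eq_or_ne c 0 with rfl | hc
  · simp [infDist_zero_of_mem S.zero_mem]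
  · have hS : c • (S : Set E) = S := by
      ext y
      rw [Set.mem_smul_set_iff_inv_smul_mem₀ hc, SetLike.mem_coe, SetLike.mem_coe,
        S.smul_mem_iff (inv_ne_zero hc)]
    rw [← infDist_smul₀ hc, hS]

namespace Matrix

theorem rank_eq_zero_iff {K k l : Type*} [CommRing K] [IsDomain K] [Fintype l]
    {M : Matrix k l K} : M.rank = 0 ↔ M = 0 := by
  rw [rank, Submodule.finrank_eq_zero, LinearMap.range_eq_bot, LinearMap.ext_iff,
    ext_iff_mulVec]
  simp

theorem rank_toBlocks₁₂_le {R k l p q : Type*} [CommRing R] [StrongRankCondition R] [Fintype p]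
    [Fintype q] (M : Matrix (k ⊕ l) (p ⊕ q) R) : M.toBlocks₁₂.rank ≤ M.rank :=
  rank_submatrix_le M Sum.inl Sum.inr

theorem rank_toBlocks₂₁_le {R k l p q : Type*} [CommRing R] [StrongRankCondition R] [Fintype p]
    [Fintype q] (M : Matrix (k ⊕ l) (p ⊕ q) R) : M.toBlocks₂₁.rank ≤ M.rank :=
  rank_submatrix_le M Sum.inr Sum.inl

section Frobenius

variable {α k l p q : Type*} [SeminormedAddCommGroup α] [Fintype k] [Fintype l] [Fintype p]
  [Fintype q]

theorem frobenius_norm_sq (A : Matrix k l α) : ‖A‖ ^ 2 = ∑ i, ∑ j, ‖A i j‖ ^ 2 := by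
  rw [frobenius_norm_def, ← Real.sqrt_eq_rpow, Real.sq_sqrt (by positivity)]
  simp only [Real.rpow_ofNat]

theorem frobenius_norm_fromBlocks_sq (A : Matrix k p α) (B : Matrix k q α) (C : Matrix l p α)
    (D : Matrix l q α) :
    ‖fromBlocks A B C D‖ ^ 2 = ‖A‖ ^ 2 + ‖B‖ ^ 2 + ‖C‖ ^ 2 + ‖D‖ ^ 2 := by
  simp only [frobenius_norm_sq, Fintype.sum_sum_type, fromBlocks_apply₁₁, fromBlocks_apply₁₂,
    fromBlocks_apply₂₁, fromBlocks_apply₂₂, Finset.sum_add_distrib]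
  ring

end Frobenius

end Matrix

section Complex

variable {k l : Type*} [Fintype k] [Fintype l]

theorem frobNorm_eq_norm (A : Matrix k l ℂ) : frobNorm A = ‖A‖ := by
  rw [frobNorm, ← Matrix.frobenius_norm_sq, Real.sqrt_sq (norm_nonneg A)]

theorem distMatSet_eq_infDist (x : Matrix k l ℂ) (T : Set (Matrix k l ℂ)) :
    distMatSet x T = infDist x T := by
  have hset : {d : ℝ | ∃ y ∈ T, d = frobNorm (x - y)} = Set.range fun y : T => dist x y := by
    ext d
    simp [frobNorm_eq_norm, dist_eq_norm, eq_comm]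
  rw [distMatSet, hset, sInf_range, infDist_eq_iInf]

theorem exists_rank_eq_one_norm_eq_one_infDist_eq (S : Submodule ℂ (Matrix k l ℂ))
    {B : Matrix k l ℂ} (hB : B ≠ 0) (hrank : B.rank ≤ 1) :
    ∃ x : Matrix k l ℂ, x.rank = 1 ∧ ‖x‖ = 1 ∧ infDist x S = ‖B‖⁻¹ * infDist B S := by
  have hB' : (‖B‖⁻¹ : ℂ) ≠ 0 := by simpa using hB
  refine ⟨(‖B‖⁻¹ : ℂ) • B, ?_, norm_smul_inv_norm hB, ?_⟩
  · rw [rank_smul_of_mem_nonZeroDivisors B (mem_nonZeroDivisors_of_ne_zero hB')]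
    have := Matrix.rank_eq_zero_iff.not.mpr hB
    omega
  · rw [Submodule.infDist_smul, norm_inv, Complex.norm_real, norm_norm]

theorem exists_rank_eq_one_norm_eq_one_infDist_le_two_mul (S : Submodule ℂ (Matrix k l ℂ))
    {B : Matrix k l ℂ} (hrank : B.rank ≤ 1) (hB : 1 / 2 < ‖B‖) :
    ∃ x : Matrix k l ℂ, x.rank = 1 ∧ ‖x‖ = 1 ∧ infDist x S ≤ 2 * infDist B S := by
  obtain ⟨x, hx, hxn, hxd⟩ :=
    exists_rank_eq_one_norm_eq_one_infDist_eq S (norm_pos_iff.mp (by linarith)) hrank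
  refine ⟨x, hx, hxn, hxd ▸ mul_le_mul_of_nonneg_right ?_ infDist_nonneg⟩
  rw [inv_le_comm₀ (by linarith) two_pos]
  linarith

theorem exists_rank_eq_one_norm_eq_one [DecidableEq k] [DecidableEq l] (i : k) (j : l) :
    ∃ x : Matrix k l ℂ, x.rank = 1 ∧ ‖x‖ = 1 := by
  have hsingle : single i j (1 : ℂ) ≠ 0 := fun h => by simpa using congrFun (congrFun h i) j
  have hrank : (single i j (1 : ℂ)).rank ≤ 1 := by
    rw [single_eq_single_vecMulVec_single]
    exact rank_vecMulVec_le _ _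
  obtain ⟨x, hx, hxn, -⟩ := exists_rank_eq_one_norm_eq_one_infDist_eq ⊥ hsingle hrank
  exact ⟨x, hx, hxn⟩

end Complex

section Shat

variable {n m : ℕ} (S : Submodule ℂ (Matrix (Fin n) (Fin m) ℂ))
  (X : Matrix (Fin n ⊕ Fin m) (Fin n ⊕ Fin m) ℂ)

theorem norm_sub_fromBlocks_sq (A B : Matrix (Fin n) (Fin m) ℂ) :
    ‖X - fromBlocks 0 A Bᴴ 0‖ ^ 2 = ‖X.toBlocks₁₁‖ ^ 2 + ‖X.toBlocks₁₂ - A‖ ^ 2 +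
      ‖X.toBlocks₂₁ᴴ - B‖ ^ 2 + ‖X.toBlocks₂₂‖ ^ 2 := by
  conv_lhs => rw [← fromBlocks_toBlocks X, sub_eq_add_neg, fromBlocks_neg, fromBlocks_add]
  simp only [neg_zero, add_zero, ← sub_eq_add_neg]
  rw [frobenius_norm_fromBlocks_sq, ← frobenius_norm_conjTranspose (X.toBlocks₂₁ - Bᴴ),
    conjTranspose_sub, conjTranspose_conjTranspose]

theorem Shat_nonempty : (Shat S).Nonempty :=
  ⟨0, 0, S.zero_mem, 0, S.zero_mem, by simp⟩

theorem norm_toBlocks₁₁_le_infDist_Shat : ‖X.toBlocks₁₁‖ ≤ infDist X (Shat S) :=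
  (le_infDist (Shat_nonempty S)).mpr <| by
    rintro _ ⟨A, -, B, -, rfl⟩
    rw [dist_eq_norm, ← pow_le_pow_iff_left₀ (norm_nonneg _) (norm_nonneg _) two_ne_zero,
      norm_sub_fromBlocks_sq]
    nlinarith

theorem norm_toBlocks₂₂_le_infDist_Shat : ‖X.toBlocks₂₂‖ ≤ infDist X (Shat S) :=
  (le_infDist (Shat_nonempty S)).mpr <| by
    rintro _ ⟨A, -, B, -, rfl⟩
    rw [dist_eq_norm, ← pow_le_pow_iff_left₀ (norm_nonneg _) (norm_nonneg _) two_ne_zero,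
      norm_sub_fromBlocks_sq]
    nlinarith

theorem infDist_toBlocks₁₂_le_infDist_Shat : infDist X.toBlocks₁₂ S ≤ infDist X (Shat S) :=
  (le_infDist (Shat_nonempty S)).mpr <| by
    rintro _ ⟨A, hA, B, -, rfl⟩
    refine (infDist_le_dist_of_mem hA).trans ?_
    rw [dist_eq_norm, dist_eq_norm, ← pow_le_pow_iff_left₀ (norm_nonneg _) (norm_nonneg _)
      two_ne_zero, norm_sub_fromBlocks_sq]
    nlinarith

theorem infDist_conjTranspose_toBlocks₂₁_le_infDist_Shat :
    infDist X.toBlocks₂₁ᴴ S ≤ infDist X (Shat S) :=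
  (le_infDist (Shat_nonempty S)).mpr <| by
    rintro _ ⟨A, -, B, hB, rfl⟩
    refine (infDist_le_dist_of_mem hB).trans ?_
    rw [dist_eq_norm, dist_eq_norm, ← pow_le_pow_iff_left₀ (norm_nonneg _) (norm_nonneg _)
      two_ne_zero, norm_sub_fromBlocks_sq]
    nlinarith

theorem exists_rank_eq_one_norm_eq_one_infDist_le_two_mul_infDist_Shat (hn : 0 < n) (hm : 0 < m)
    (hrank : X.rank = 1) (hnorm : ‖X‖ = 1) :
    ∃ x : Matrix (Fin n) (Fin m) ℂ, x.rank = 1 ∧ ‖x‖ = 1 ∧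
      infDist x S ≤ 2 * infDist X (Shat S) := by
  have hblocks := norm_sub_fromBlocks_sq X 0 0
  simp only [conjTranspose_zero, fromBlocks_zero, sub_zero, hnorm] at hblocks
  by_cases h₁₂ : 1 / 2 < ‖X.toBlocks₁₂‖
  · obtain ⟨x, hx, hxn, hxd⟩ := exists_rank_eq_one_norm_eq_one_infDist_le_two_mul S
      ((rank_toBlocks₁₂_le X).trans hrank.le) h₁₂
    exact ⟨x, hx, hxn, hxd.trans (by gcongr; exact infDist_toBlocks₁₂_le_infDist_Shat S X)⟩
  by_cases h₂₁ : 1 / 2 < ‖X.toBlocks₂₁ᴴ‖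
  · obtain ⟨x, hx, hxn, hxd⟩ := exists_rank_eq_one_norm_eq_one_infDist_le_two_mul S
      ((rank_conjTranspose _).trans_le ((rank_toBlocks₂₁_le X).trans hrank.le)) h₂₁
    exact ⟨x, hx, hxn,
      hxd.trans (by gcongr; exact infDist_conjTranspose_toBlocks₂₁_le_infDist_Shat S X)⟩
  push Not at h₁₂ h₂₁
  have h₁₁ := pow_le_pow_left₀ (norm_nonneg _) (norm_toBlocks₁₁_le_infDist_Shat S X) 2
  have h₂₂ := pow_le_pow_left₀ (norm_nonneg _) (norm_toBlocks₂₂_le_infDist_Shat S X) 2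
  obtain ⟨x, hx, hxn⟩ := exists_rank_eq_one_norm_eq_one (⟨0, hn⟩ : Fin n) (⟨0, hm⟩ : Fin m)
  refine ⟨x, hx, hxn, ?_⟩
  calc infDist x S ≤ dist x 0 := infDist_le_dist_of_mem S.zero_mem
    _ = 1 := by rw [dist_zero_right, hxn]
    _ ≤ 2 * infDist X (Shat S) := by
      nlinarith [norm_nonneg X.toBlocks₁₂, norm_nonneg X.toBlocks₂₁ᴴ,
        infDist_nonneg (x := X) (s := Shat S)]

end Shat

/-- for every normalized rank-one `X ∈ Mat_{n+m}(ℂ)` there is a normalized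
rank-one `x ∈ ℂ^{n×m}` with `dist₂(x,S) ≤ 2·dist₂(X,Ŝ)`; in particular the corresponding
infima satisfy `inf_S ≤ 2·inf_Ŝ`. -/
theorem rank_one_dist_comparison {n m : ℕ} (hn : 0 < n) (hm : 0 < m)
    (S : Submodule ℂ (Matrix (Fin n) (Fin m) ℂ)) :
    (∀ X : Matrix (Fin n ⊕ Fin m) (Fin n ⊕ Fin m) ℂ,
      X.rank = 1 → frobNorm X = 1 →
      ∃ x : Matrix (Fin n) (Fin m) ℂ, x.rank = 1 ∧ frobNorm x = 1 ∧
        distMatSet x (S : Set (Matrix (Fin n) (Fin m) ℂ))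
          ≤ 2 * distMatSet X (Shat S)) ∧
    sInf {d : ℝ | ∃ x : Matrix (Fin n) (Fin m) ℂ,
        x.rank = 1 ∧ frobNorm x = 1 ∧
        d = distMatSet x (S : Set (Matrix (Fin n) (Fin m) ℂ))}
      ≤ 2 * sInf {d : ℝ | ∃ X : Matrix (Fin n ⊕ Fin m) (Fin n ⊕ Fin m) ℂ,
        X.rank = 1 ∧ frobNorm X = 1 ∧ d = distMatSet X (Shat S)} := by
  simp only [frobNorm_eq_norm, distMatSet_eq_infDist]
  have key := fun X ↦ exists_rank_eq_one_norm_eq_one_infDist_le_two_mul_infDist_Shat S X hn hm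
  refine ⟨key, csInf_le_mul_csInf_of_forall_exists_le ?_ ?_ two_pos ?_⟩
  · exact ⟨0, by rintro _ ⟨x, -, -, rfl⟩; exact infDist_nonneg⟩
  · obtain ⟨X, hX, hXn⟩ := exists_rank_eq_one_norm_eq_one
      (Sum.inl ⟨0, hn⟩ : Fin n ⊕ Fin m) (Sum.inl ⟨0, hn⟩ : Fin n ⊕ Fin m)
    exact ⟨_, X, hX, hXn, rfl⟩
  · rintro _ ⟨X, hX, hXn, rfl⟩
    obtain ⟨x, hx, hxn, hxd⟩ := key X hX hXn
    exact ⟨_, ⟨x, hx, hxn, rfl⟩, hxd⟩
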